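/- The trinomial q-multinomial coefficient satisfies the five-term recursion: [L choose s,i,j]_q = [L-1 choose s,i,j]_q + q^{L-i}[L-1 choose s,i-1,j]_q + q^{L-j}[L-1 choose s,i,j-1]_q + q^{L-s-i-j}[L-1 choose s-1,i,j]_q + q^{L-i-j}(1-q^{L-1})[L-2 choose s,i-1,j-1]_q, for all integers L, s, i, j with s, i, j ≥ 0. -/

import Mathlib

/-!
Write `(x)_n` for `poch x n` and let `s, i, j ≥ 0` with `s + i + j = m + 1`. Each coefficient
of the recursion is `(q^(L-m))_m / ((q)_s (q)_i (q)_j)` times one factor: `1 - q^L` on the left,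
and `1 - q^(L-s-i-j)`, `1 - q^i`, `1 - q^j`, `1 - q^s`, `(1 - q^i)(1 - q^j)` for the five terms
on the right (a term whose lower index drops to `-1` vanishes, as does its factor `1 - q^0`).
With `x = q^(L-s-i-j)` the recursion is then the polynomial identity

    1 - q^L = (1 - x) + x q^(s+j) (1 - q^i) + x q^(s+i) (1 - q^j) + x (1 - q^s)
                + x q^s (1 - q^i) (1 - q^j).
-/

open Finset

noncomputable section

abbrev K : Type := RatFunc ℚ

def q : K := RatFunc.X

/-- Extended q-Pochhammer symbol `(a;q)_n` for integer `n`. -/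
def poch (a : K) (n : ℤ) : K :=
  if 0 ≤ n then ∏ j ∈ Finset.range n.toNat, (1 - a * q ^ j)
  else (∏ j ∈ Finset.range (-n).toNat, (1 - a * q ^ (-(j + 1 : ℤ))))⁻¹

/-- Extended Gaussian binomial coefficient `[n choose m]_q`. -/
def qbinom (n m : ℤ) : K :=
  if 0 ≤ m then poch (q ^ (n - m + 1)) m / poch q m else 0

/-- Triangular number `T_n = n(n+1)/2`. -/
def T (n : ℤ) : ℤ := n * (n + 1) / 2

/-- The q-multinomial coefficient `[L choose a,b,c]_q`. -/
def qmul3 (L a b c : ℤ) : K := qbinom L a * qbinom (L - a) b * qbinom (L - a - b) c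

lemma q_ne_zero : q ≠ 0 := RatFunc.X_ne_zero

lemma q_zpow_mul_pow (k : ℤ) (n : ℕ) : q ^ k * q ^ n = q ^ (k + n) := by
  rw [zpow_add₀ q_ne_zero, zpow_natCast]

lemma one_sub_q_pow_ne_zero {k : ℕ} (hk : k ≠ 0) : 1 - q ^ k ≠ 0 := by
  rw [sub_ne_zero, ne_comm]
  intro h
  have hdeg : RatFunc.intDegree (q ^ k) = k := by
    rw [q, ← RatFunc.algebraMap_X, ← map_pow, RatFunc.intDegree_polynomial,
      Polynomial.natDegree_X_pow]
  rw [h, RatFunc.intDegree_one] at hdeg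
  omega

lemma poch_natCast (x : K) (n : ℕ) : poch x n = ∏ t ∈ range n, (1 - x * q ^ t) := by
  simp [poch]

lemma poch_add (x : K) (m n : ℕ) : poch x ↑(m + n) = poch x m * poch (x * q ^ m) n := by
  simp only [poch_natCast, prod_range_add, pow_add, mul_assoc]

lemma poch_succ (x : K) (n : ℕ) : poch x ↑(n + 1) = poch x n * (1 - x * q ^ n) := by
  rw [poch_natCast, poch_natCast, prod_range_succ]

lemma poch_succ' (x : K) (n : ℕ) : poch x ↑(n + 1) = (1 - x) * poch (x * q) n := by
  rw [add_comm, poch_add, poch_natCast x 1]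
  simp

lemma poch_q_succ (n : ℕ) : poch q ↑(n + 1) = poch q n * (1 - q ^ (n + 1)) := by
  rw [poch_succ, ← pow_succ']

lemma poch_q_ne_zero (n : ℕ) : poch q n ≠ 0 := by
  rw [poch_natCast, prod_ne_zero_iff]
  intro t _
  rw [← pow_succ']
  exact one_sub_q_pow_ne_zero t.succ_ne_zero

lemma qbinom_natCast_mul (n : ℤ) (m : ℕ) :
    qbinom n m * poch q m = poch (q ^ (n - m + 1)) m := by
  simp [qbinom, div_mul_cancel₀ _ (poch_q_ne_zero m)]

lemma qbinom_of_neg (n : ℤ) {m : ℤ} (h : m < 0) : qbinom n m = 0 := by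
  simp [qbinom, h]

lemma qmul3_of_neg (L : ℤ) {a b c : ℤ} (h : a < 0 ∨ b < 0 ∨ c < 0) : qmul3 L a b c = 0 := by
  rcases h with h | h | h <;> simp [qmul3, qbinom_of_neg _ h]

lemma qmul3_mul_poch (L : ℤ) (a b c : ℕ) :
    qmul3 L a b c * (poch q a * poch q b * poch q c) =
      poch (q ^ (L - ↑(a + b + c) + 1)) ↑(a + b + c) := by
  calc qmul3 L a b c * (poch q a * poch q b * poch q c)
      = (qbinom L a * poch q a) * (qbinom (L - a) b * poch q b) *
          (qbinom (L - a - b) c * poch q c) := by rw [qmul3]; ring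
    _ = poch (q ^ (L - ↑(a + b + c) + 1)) ↑(c + b + a) := by
      rw [qbinom_natCast_mul, qbinom_natCast_mul, qbinom_natCast_mul, poch_add, poch_add,
        q_zpow_mul_pow, q_zpow_mul_pow]
      push_cast
      ring_nf
    _ = _ := by rw [show c + b + a = a + b + c by ring]

lemma qmul3_natCast (L : ℤ) (a b c : ℕ) :
    qmul3 L a b c =
      poch (q ^ (L - ↑(a + b + c) + 1)) ↑(a + b + c) / (poch q a * poch q b * poch q c) :=
  eq_div_of_mul_eq (by simp [poch_q_ne_zero]) (qmul3_mul_poch L a b c)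

lemma qmul3_swap₁₂ (L a b c : ℤ) : qmul3 L a b c = qmul3 L b a c := by
  by_cases h : a < 0 ∨ b < 0 ∨ c < 0
  · rw [qmul3_of_neg L h, qmul3_of_neg L (by omega)]
  obtain ⟨a, rfl⟩ := Int.eq_ofNat_of_zero_le (a := a) (by omega)
  obtain ⟨b, rfl⟩ := Int.eq_ofNat_of_zero_le (a := b) (by omega)
  obtain ⟨c, rfl⟩ := Int.eq_ofNat_of_zero_le (a := c) (by omega)
  rw [qmul3_natCast, qmul3_natCast, add_comm b a, mul_comm (poch q b)]

lemma qmul3_swap₂₃ (L a b c : ℤ) : qmul3 L a b c = qmul3 L a c b := by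
  by_cases h : a < 0 ∨ b < 0 ∨ c < 0
  · rw [qmul3_of_neg L h, qmul3_of_neg L (by omega)]
  obtain ⟨a, rfl⟩ := Int.eq_ofNat_of_zero_le (a := a) (by omega)
  obtain ⟨b, rfl⟩ := Int.eq_ofNat_of_zero_le (a := b) (by omega)
  obtain ⟨c, rfl⟩ := Int.eq_ofNat_of_zero_le (a := c) (by omega)
  rw [qmul3_natCast, qmul3_natCast, add_assoc, add_comm b c, ← add_assoc,
    mul_right_comm (poch q a)]

lemma qmul3_natCast_of_add_eq_succ (L : ℤ) {a b c m : ℕ} (h : a + b + c = m + 1) :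
    qmul3 L a b c = (1 - q ^ L) * poch (q ^ (L - m)) m / (poch q a * poch q b * poch q c) := by
  have e : L - ↑(m + 1) + 1 = L - m := by push_cast; ring
  rw [qmul3_natCast, h, poch_succ, q_zpow_mul_pow, e, sub_add_cancel, mul_comm]

lemma qmul3_sub_one_natCast_of_add_eq_succ (L : ℤ) {a b c m : ℕ} (h : a + b + c = m + 1) :
    qmul3 (L - 1) a b c =
      (1 - q ^ (L - a - b - c)) * poch (q ^ (L - m)) m / (poch q a * poch q b * poch q c) := by
  have e : L - 1 - ↑(m + 1) + 1 = L - a - b - c := by rw [← h]; push_cast; ring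
  have e' : L - a - b - c + 1 = L - m := by omega
  rw [qmul3_natCast, h, poch_succ', e, ← zpow_add_one₀ q_ne_zero, e']

lemma qmul3_sub_one_natCast_sub_one_of_add_eq_succ (L : ℤ) {a b c m : ℕ}
    (h : a + b + c = m + 1) :
    qmul3 (L - 1) (a - 1) b c =
      (1 - q ^ a) * poch (q ^ (L - m)) m / (poch q a * poch q b * poch q c) := by
  cases a with
  | zero => simp [qmul3_of_neg]
  | succ a =>
    have e : L - 1 - ↑(a + b + c) + 1 = L - m := by omega
    rw [show ((a + 1 : ℕ) : ℤ) - 1 = a by omega, qmul3_natCast, e, poch_q_succ,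
      show a + b + c = m by omega]
    field_simp [one_sub_q_pow_ne_zero a.succ_ne_zero]

lemma one_sub_q_zpow_mul_qmul3_sub_two_of_add_eq_succ (L : ℤ) {a b c m : ℕ}
    (h : a + b + c = m + 1) :
    (1 - q ^ (L - 1)) * qmul3 (L - 2) (a - 1) (b - 1) c =
      (1 - q ^ a) * (1 - q ^ b) * poch (q ^ (L - m)) m /
        (poch q a * poch q b * poch q c) := by
  cases a with
  | zero => simp [qmul3_of_neg]
  | succ a =>
  cases b with
  | zero => simp [qmul3_of_neg]
  | succ b =>
    obtain rfl : m = a + b + c + 1 := by omega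
    have e : L - 2 - ↑(a + b + c) + 1 = L - ↑(a + b + c + 1) := by push_cast; ring
    have e' : L - ↑(a + b + c + 1) + ↑(a + b + c) = L - 1 := by push_cast; ring
    rw [show ((a + 1 : ℕ) : ℤ) - 1 = a by omega, show ((b + 1 : ℕ) : ℤ) - 1 = b by omega,
      qmul3_natCast, e, poch_succ _ (a + b + c), q_zpow_mul_pow, e', poch_q_succ, poch_q_succ]
    field_simp [one_sub_q_pow_ne_zero a.succ_ne_zero, one_sub_q_pow_ne_zero b.succ_ne_zero]

theorem qmul3_recurrence (L s i j : ℤ) (hs : 0 ≤ s) (hi : 0 ≤ i) (hj : 0 ≤ j) :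
    qmul3 L s i j =
      qmul3 (L - 1) s i j + q ^ (L - i) * qmul3 (L - 1) s (i - 1) j +
        q ^ (L - j) * qmul3 (L - 1) s i (j - 1) +
        q ^ (L - s - i - j) * qmul3 (L - 1) (s - 1) i j +
        q ^ (L - i - j) * (1 - q ^ (L - 1)) * qmul3 (L - 2) s (i - 1) (j - 1) := by
  lift s to ℕ using hs
  lift i to ℕ using hi
  lift j to ℕ using hj
  obtain h0 | ⟨m, hm⟩ : s + i + j = 0 ∨ ∃ m, s + i + j = m + 1 :=
    (s + i + j).eq_zero_or_eq_succ_pred.imp_right fun h => ⟨_, h⟩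
  · obtain ⟨rfl, rfl, rfl⟩ : s = 0 ∧ i = 0 ∧ j = 0 := by omega
    simp [qmul3, qbinom, poch]
  -- move each decremented index to the first position(s), where the lemmas above expect it
  rw [qmul3_swap₁₂ (L - 1) s (i - 1), qmul3_swap₂₃ (L - 1) s i (j - 1),
    qmul3_swap₁₂ (L - 1) s (j - 1), qmul3_swap₁₂ (L - 2) s (i - 1),
    qmul3_swap₂₃ (L - 2) (i - 1) s (j - 1), mul_assoc (q ^ (L - i - j)),
    qmul3_natCast_of_add_eq_succ L hm, qmul3_sub_one_natCast_of_add_eq_succ L hm,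
    qmul3_sub_one_natCast_sub_one_of_add_eq_succ L (show i + s + j = m + 1 by omega),
    qmul3_sub_one_natCast_sub_one_of_add_eq_succ L (show j + s + i = m + 1 by omega),
    qmul3_sub_one_natCast_sub_one_of_add_eq_succ L hm,
    one_sub_q_zpow_mul_qmul3_sub_two_of_add_eq_succ L (show i + j + s = m + 1 by omega)]
  have hpow : ∀ (e : ℤ) (k : ℕ), e = L - s - i - j + k →
      q ^ e = q ^ (L - s - i - j) * q ^ k := fun e k he => by rw [he, q_zpow_mul_pow]
  rw [hpow L (s + i + j) (by push_cast; ring), hpow (L - i) (s + j) (by push_cast; ring),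
    hpow (L - j) (s + i) (by push_cast; ring), hpow (L - i - j) s (by ring)]
  ring
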